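/- Assume F_A(b') is finite for every b' ∈ ℤ^m, and let b ∈ ℤ^m and x ∈ F_A(b). Then x is Pareto-optimal for b if and only if for every minimal element α of L_C and every Pareto-optimal β of F_A(A·α), whenever x − α + β has nonnegative components, C·(x − α + β) ⪇ C·x does not hold. (That is, in the ≺_C-skeleton of the b-fiber the points with no strictly improving outgoing reduction are exactly the Pareto-optimal solutions.) -/

import Mathlib

open Matrix

/-- Cast a vector of naturals to a vector of integers. -/
def toInt {n : ℕ} (x : Fin n → ℕ) : Fin n → ℤ := fun i => (x i : ℤ)

/-- `domLt C v u` means `C·v ⪇ C·u`: componentwise `≤` with `C·v ≠ C·u`. -/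
def domLt {n k : ℕ} (C : Matrix (Fin k) (Fin n) ℤ) (v u : Fin n → ℤ) : Prop :=
  (∀ j, C.mulVec v j ≤ C.mulVec u j) ∧ C.mulVec v ≠ C.mulVec u

/-- The feasible set `F_A(b) = {x ∈ ℕ^n : A·x = b}`. -/
def FA {m n : ℕ} (A : Matrix (Fin m) (Fin n) ℤ) (b : Fin m → ℤ) : Set (Fin n → ℕ) :=
  {x | A.mulVec (toInt x) = b}

/-- `x` is Pareto-optimal for `b`: feasible and not dominated by any feasible point. -/
def ParetoOpt {m n k : ℕ} (A : Matrix (Fin m) (Fin n) ℤ) (C : Matrix (Fin k) (Fin n) ℤ)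
    (b : Fin m → ℤ) (x : Fin n → ℕ) : Prop :=
  x ∈ FA A b ∧ ¬ ∃ y ∈ FA A b, domLt C (toInt y) (toInt x)

/-- The set `L_C` of dominated solutions of all fibers. -/
def LC {m n k : ℕ} (A : Matrix (Fin m) (Fin n) ℤ) (C : Matrix (Fin k) (Fin n) ℤ) :
    Set (Fin n → ℕ) :=
  {α | ∃ β : Fin n → ℕ, A.mulVec (toInt β) = A.mulVec (toInt α) ∧
    domLt C (toInt β) (toInt α)}

/-- The minimal elements of `L_C` with respect to the componentwise order. -/
def minLC {m n k : ℕ} (A : Matrix (Fin m) (Fin n) ℤ) (C : Matrix (Fin k) (Fin n) ℤ) :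
    Set (Fin n → ℕ) :=
  {α ∈ LC A C | ∀ α' ∈ LC A C, (∀ i, α' i ≤ α i) → α' = α}

/-! If `x` is dominated in its fiber then `x ∈ L_C`, hence some minimal `α ≤ x` lies in `L_C`.
Finiteness of the fiber of `α` lets us replace a point dominating `α` by a Pareto-optimal one `β`,
and then `x - α + β` is an improving reduction of `x`. Conversely, an improving reduction is a
feasible point dominating `x`. -/

section

variable {m n k : ℕ} (A : Matrix (Fin m) (Fin n) ℤ) (C : Matrix (Fin k) (Fin n) ℤ)

lemma domLt_iff_lt {v u : Fin n → ℤ} : domLt C v u ↔ C *ᵥ v < C *ᵥ u := by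
  rw [lt_iff_le_and_ne]
  rfl

lemma domLt_sub_add_iff (x a b : Fin n → ℤ) : domLt C (x - a + b) x ↔ domLt C b a := by
  rw [domLt_iff_lt, domLt_iff_lt, mulVec_add, mulVec_sub, sub_add_eq_add_sub, sub_lt_iff_lt_add,
    add_lt_add_iff_left]

lemma exists_toInt_eq {v : Fin n → ℤ} (hv : ∀ i, 0 ≤ v i) : ∃ y, toInt y = v :=
  ⟨fun i => (v i).toNat, funext fun i => Int.toNat_of_nonneg (hv i)⟩

lemma mulVec_sub_add_of_mulVec_eq {x a b : Fin n → ℤ} (h : A *ᵥ b = A *ᵥ a) :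
    A *ᵥ (x - a + b) = A *ᵥ x := by
  rw [mulVec_add, mulVec_sub, h, sub_add_cancel]

lemma mem_LC_of_domLt {b : Fin m → ℤ} {x y : Fin n → ℕ} (hx : x ∈ FA A b) (hy : y ∈ FA A b)
    (h : domLt C (toInt y) (toInt x)) : x ∈ LC A C :=
  ⟨y, hy.trans hx.symm, h⟩

lemma exists_minLC_le {x : Fin n → ℕ} (hx : x ∈ LC A C) : ∃ α ∈ minLC A C, α ≤ x := by
  obtain ⟨α, hαx, hα⟩ := exists_minimal_le_of_wellFoundedLT (· ∈ LC A C) x hx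
  exact ⟨α, ⟨hα.1, fun α' hα' hle => le_antisymm hle (hα.2 hα' hle)⟩, hαx⟩

lemma exists_paretoOpt_domLt {b : Fin m → ℤ} (hfin : (FA A b).Finite) {y : Fin n → ℕ}
    (hy : ∃ w ∈ FA A b, domLt C (toInt w) (toInt y)) :
    ∃ β, ParetoOpt A C b β ∧ domLt C (toInt β) (toInt y) := by
  set s := {γ ∈ FA A b | domLt C (toInt γ) (toInt y)}
  obtain ⟨β, ⟨hβ, hβy⟩, hmin⟩ :=
    (hfin.subset fun _ h => h.1).exists_minimalFor (fun γ => C *ᵥ toInt γ) s hy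
  refine ⟨β, ⟨hβ, fun ⟨γ, hγ, hγβ⟩ => ?_⟩, hβy⟩
  rw [domLt_iff_lt] at hγβ hβy
  exact hγβ.not_ge (hmin ⟨hγ, (domLt_iff_lt C).2 (hγβ.trans hβy)⟩ hγβ.le)

end

theorem pareto_iff_no_improving_reduction_general {m n k : ℕ}
    (A : Matrix (Fin m) (Fin n) ℤ) (C : Matrix (Fin k) (Fin n) ℤ)
    (hfin : ∀ b' : Fin m → ℤ, (FA A b').Finite)
    (b : Fin m → ℤ) (x : Fin n → ℕ) (hx : x ∈ FA A b) :
    ParetoOpt A C b x ↔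
      ∀ α ∈ minLC A C, ∀ β : Fin n → ℕ,
        ParetoOpt A C (A.mulVec (toInt α)) β →
        (∀ i, (0:ℤ) ≤ toInt x i - toInt α i + toInt β i) →
        ¬ domLt C (toInt x - toInt α + toInt β) (toInt x) := by
  constructor
  · rintro ⟨-, hx_opt⟩ α - β hβ hpos hdom
    obtain ⟨y, hy⟩ := exists_toInt_eq (v := toInt x - toInt α + toInt β) hpos
    refine hx_opt ⟨y, ?_, hy ▸ hdom⟩
    change A *ᵥ toInt y = b
    rw [hy, mulVec_sub_add_of_mulVec_eq A hβ.1, hx]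
  · intro h
    refine ⟨hx, fun ⟨y, hy, hyx⟩ => ?_⟩
    obtain ⟨α, hα, hαx⟩ := exists_minLC_le A C (mem_LC_of_domLt A C hx hy hyx)
    obtain ⟨β, hβ, hβα⟩ := exists_paretoOpt_domLt A C (hfin _) hα.1
    refine h α hα β hβ (fun i => ?_) ((domLt_sub_add_iff C _ _ _).2 hβα)
    have : α i ≤ x i := hαx i
    simp only [toInt]
    omega

theorem pareto_iff_no_improving_reduction {m n k : ℕ} (hm : 0 < m) (hn : 0 < n) (hk : 0 < k)
    (A : Matrix (Fin m) (Fin n) ℤ) (C : Matrix (Fin k) (Fin n) ℤ)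
    (hC : ∀ i j, 0 ≤ C i j)
    (hfin : ∀ b' : Fin m → ℤ, (FA A b').Finite)
    (b : Fin m → ℤ) (x : Fin n → ℕ) (hx : x ∈ FA A b) :
    ParetoOpt A C b x ↔
      ∀ α ∈ minLC A C, ∀ β : Fin n → ℕ,
        ParetoOpt A C (A.mulVec (toInt α)) β →
        (∀ i, (0:ℤ) ≤ toInt x i - toInt α i + toInt β i) →
        ¬ domLt C (toInt x - toInt α + toInt β) (toInt x) :=
  pareto_iff_no_improving_reduction_general A C hfin b x hx
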